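/- arXiv:2503.16700 — 2 statements merged into one kernel-verified Lean document; each statement's English description precedes it below -/
import Mathlib

section
/- Suppose β > 0, ε > 0, and Q₁, Q₂ : S×A → ℝ satisfy L₁(Q₁) ≤ ε and L₂(Q₂) ≤ ε, where L₁, L₂ are the SGT2 expected loss functions. Then both ‖Q₁ − Q*‖∞ and ‖Q₂ − Q*‖∞ are at most √(ε·|S|·|A|)/(1−γ) + (γ/(1−γ))·√(2ε·|S|·|A|/β). -/
/-!
Write `N = |S|·|A|`. Since the loss is an average of nonnegative terms, each term is at most
`ε N`. By Jensen's inequality for the distribution `P(·|s,a)`, the first part of the `(s,a)` term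
of `L₁` dominates `((T Q₂)(s,a) - Q₁(s,a))²`, and its second part is `(β/2)(Q₂ - Q₁)(s,a)²`.
So `‖T Q₂ - Q₁‖∞ ≤ √(ε N)` and `‖Q₂ - Q₁‖∞ ≤ √(2 ε N / β)`. Splitting
`Q₁ - Q* = (Q₁ - T Q₂) + (T Q₂ - T Q₁) + (T Q₁ - T Q*)` and using that `T` is a `γ`-contraction
gives `‖Q₁ - Q*‖∞ ≤ √(ε N) + γ √(2 ε N / β) + γ ‖Q₁ - Q*‖∞`, which rearranges to the bound.
The loss `L₂` is `L₁` with `Q₁` and `Q₂` swapped, so the same argument bounds `‖Q₂ - Q*‖∞`.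
-/

open Finset

/-- Maximum of `Q s' a'` over actions `a'`. -/
noncomputable def maxQ {S A : Type*} [Fintype A] [Nonempty A]
    (Q : S → A → ℝ) (s' : S) : ℝ :=
  univ.sup' univ_nonempty (fun a' => Q s' a')

/-- The Bellman optimality operator. -/
noncomputable def bellmanT {S A : Type*} [Fintype S] [Fintype A] [Nonempty A]
    (P r : S → A → S → ℝ) (γ : ℝ) (Q : S → A → ℝ) : S → A → ℝ :=
  fun s a => ∑ s', P s a s' * (r s a s' + γ * maxQ Q s')

/-- Sup norm on `ℝ^{S×A}`. -/
noncomputable def supNorm {S A : Type*} [Fintype S] [Fintype A] [Nonempty S] [Nonempty A]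
    (Q : S → A → ℝ) : ℝ :=
  univ.sup' univ_nonempty (fun p : S × A => |Q p.1 p.2|)

/-- SGT2 expected loss `L₁`. -/
noncomputable def sgt2L1 {S A : Type*} [Fintype S] [Fintype A] [Nonempty A]
    (P r : S → A → S → ℝ) (γ β : ℝ) (Q₁ Q₂ : S → A → ℝ) : ℝ :=
  (1 / ((Fintype.card S : ℝ) * (Fintype.card A : ℝ))) *
    ∑ p : S × A,
      ((∑ s', P p.1 p.2 s' * (r p.1 p.2 s' + γ * maxQ Q₂ s' - Q₁ p.1 p.2) ^ 2) +
        (β / 2) * (Q₂ p.1 p.2 - Q₁ p.1 p.2) ^ 2)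

/-- SGT2 expected loss `L₂`. -/
noncomputable def sgt2L2 {S A : Type*} [Fintype S] [Fintype A] [Nonempty A]
    (P r : S → A → S → ℝ) (γ β : ℝ) (Q₁ Q₂ : S → A → ℝ) : ℝ :=
  (1 / ((Fintype.card S : ℝ) * (Fintype.card A : ℝ))) *
    ∑ p : S × A,
      ((∑ s', P p.1 p.2 s' * (r p.1 p.2 s' + γ * maxQ Q₁ s' - Q₂ p.1 p.2) ^ 2) +
        (β / 2) * (Q₁ p.1 p.2 - Q₂ p.1 p.2) ^ 2)

lemma sq_sum_mul_le_sum_mul_sq {ι : Type*} [Fintype ι] {p x : ι → ℝ} (hp0 : ∀ i, 0 ≤ p i)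
    (hp1 : ∑ i, p i = 1) : (∑ i, p i * x i) ^ 2 ≤ ∑ i, p i * x i ^ 2 := by
  have h := sum_sq_le_sum_mul_sum_of_sq_le_mul univ (r := fun i => p i * x i)
    (fun i _ => hp0 i) (fun i _ => mul_nonneg (hp0 i) (sq_nonneg (x i)))
    (fun i _ => (by ring : (p i * x i) ^ 2 = p i * (p i * x i ^ 2)).le)
  rwa [hp1, one_mul] at h

section SupNorm

variable {S A : Type*} [Fintype S] [Fintype A] [Nonempty S] [Nonempty A]

lemma abs_le_supNorm (Q : S → A → ℝ) (s : S) (a : A) : |Q s a| ≤ supNorm Q :=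
  le_sup' (fun p : S × A => |Q p.1 p.2|) (mem_univ (s, a))

lemma supNorm_le {Q : S → A → ℝ} {c : ℝ} (h : ∀ s a, |Q s a| ≤ c) : supNorm Q ≤ c :=
  sup'_le _ _ fun p _ => h p.1 p.2

lemma maxQ_le_maxQ_add_supNorm (Q Q' : S → A → ℝ) (s : S) :
    maxQ Q s ≤ maxQ Q' s + supNorm (fun s a => Q s a - Q' s a) :=
  sup'_le _ _ fun a _ => by
    have hQ' : Q' s a ≤ maxQ Q' s := le_sup' (fun a => Q' s a) (mem_univ a)
    have hdiff := (le_abs_self _).trans (abs_le_supNorm (fun s a => Q s a - Q' s a) s a)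
    linarith

lemma abs_maxQ_sub_maxQ_le (Q Q' : S → A → ℝ) (s : S) :
    |maxQ Q s - maxQ Q' s| ≤ supNorm (fun s a => Q s a - Q' s a) := by
  have hswap : supNorm (fun s a => Q' s a - Q s a) = supNorm (fun s a => Q s a - Q' s a) := by
    simp only [supNorm, abs_sub_comm]
  rw [abs_sub_le_iff, sub_le_iff_le_add', sub_le_iff_le_add']
  exact ⟨maxQ_le_maxQ_add_supNorm Q Q' s, hswap ▸ maxQ_le_maxQ_add_supNorm Q' Q s⟩

end SupNorm

section Bellman

variable {S A : Type*} [Fintype S] [Fintype A] [Nonempty A]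
  {P r : S → A → S → ℝ} {γ : ℝ}

lemma bellmanT_sub_eq_sum (hP1 : ∀ s a, ∑ s', P s a s' = 1) (Q Q' : S → A → ℝ) (s : S) (a : A) :
    bellmanT P r γ Q s a - Q' s a = ∑ s', P s a s' * (r s a s' + γ * maxQ Q s' - Q' s a) := by
  simp only [bellmanT, mul_sub, sum_sub_distrib, ← sum_mul, hP1, one_mul, mul_add]

lemma abs_bellmanT_sub_bellmanT_le [Nonempty S] (hγ0 : 0 ≤ γ) (hP0 : ∀ s a s', 0 ≤ P s a s')
    (hP1 : ∀ s a, ∑ s', P s a s' = 1) (Q Q' : S → A → ℝ) (s : S) (a : A) :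
    |bellmanT P r γ Q s a - bellmanT P r γ Q' s a| ≤
      γ * supNorm (fun s a => Q s a - Q' s a) := by
  have hdiff : bellmanT P r γ Q s a - bellmanT P r γ Q' s a =
      ∑ s', P s a s' * (γ * (maxQ Q s' - maxQ Q' s')) := by
    simp only [bellmanT, ← sum_sub_distrib]
    exact sum_congr rfl fun s' _ => by ring
  calc |bellmanT P r γ Q s a - bellmanT P r γ Q' s a|
      ≤ ∑ s', |P s a s' * (γ * (maxQ Q s' - maxQ Q' s'))| := hdiff ▸ abs_sum_le_sum_abs _ _
    _ ≤ ∑ s', P s a s' * (γ * supNorm (fun s a => Q s a - Q' s a)) := by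
        gcongr with s'
        rw [abs_mul, abs_mul, abs_of_nonneg (hP0 s a s'), abs_of_nonneg hγ0]
        gcongr
        · exact hP0 s a s'
        · exact abs_maxQ_sub_maxQ_le Q Q' s'
    _ = γ * supNorm (fun s a => Q s a - Q' s a) := by rw [← sum_mul, hP1, one_mul]

lemma supNorm_sub_fixedPoint_le [Nonempty S] (hγ0 : 0 ≤ γ) (hγ1 : γ < 1)
    (hP0 : ∀ s a s', 0 ≤ P s a s') (hP1 : ∀ s a, ∑ s', P s a s' = 1)
    {Qstar : S → A → ℝ} (hQstar : bellmanT P r γ Qstar = Qstar)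
    {Qx Qy : S → A → ℝ} {δ η : ℝ} (hδ : ∀ s a, |bellmanT P r γ Qy s a - Qx s a| ≤ δ)
    (hη : ∀ s a, |Qy s a - Qx s a| ≤ η) :
    supNorm (fun s a => Qx s a - Qstar s a) ≤ δ / (1 - γ) + γ / (1 - γ) * η := by
  set D := supNorm (fun s a => Qx s a - Qstar s a)
  have hyx : γ * supNorm (fun s a => Qy s a - Qx s a) ≤ γ * η :=
    mul_le_mul_of_nonneg_left (supNorm_le hη) hγ0
  have hD : D ≤ δ + γ * η + γ * D := supNorm_le fun s a => by
    have h₁ := hδ s a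
    have h₂ := abs_bellmanT_sub_bellmanT_le (r := r) hγ0 hP0 hP1 Qy Qx s a
    have h₃ : |bellmanT P r γ Qx s a - Qstar s a| ≤ γ * D := by
      have h := abs_bellmanT_sub_bellmanT_le (r := r) hγ0 hP0 hP1 Qx Qstar s a
      rwa [hQstar] at h
    calc |Qx s a - Qstar s a|
        = |-(bellmanT P r γ Qy s a - Qx s a) + (bellmanT P r γ Qy s a - bellmanT P r γ Qx s a)
            + (bellmanT P r γ Qx s a - Qstar s a)| := by ring_nf
      _ ≤ |bellmanT P r γ Qy s a - Qx s a| + |bellmanT P r γ Qy s a - bellmanT P r γ Qx s a|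
            + |bellmanT P r γ Qx s a - Qstar s a| := by
        simpa only [abs_neg] using abs_add_three (-(bellmanT P r γ Qy s a - Qx s a))
          (bellmanT P r γ Qy s a - bellmanT P r γ Qx s a) (bellmanT P r γ Qx s a - Qstar s a)
      _ ≤ δ + γ * η + γ * D := by linarith
  have h1γ : 0 < 1 - γ := sub_pos.mpr hγ1
  rw [div_mul_eq_mul_div, ← add_div, le_div_iff₀ h1γ]
  linarith

end Bellman

lemma sgt2L2_eq_sgt2L1_swap {S A : Type*} [Fintype S] [Fintype A] [Nonempty A]
    (P r : S → A → S → ℝ) (γ β : ℝ) (Q₁ Q₂ : S → A → ℝ) :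
    sgt2L2 P r γ β Q₁ Q₂ = sgt2L1 P r γ β Q₂ Q₁ := rfl

section Loss

variable {S A : Type*} [Fintype S] [Fintype A] [Nonempty S] [Nonempty A]
  {P r : S → A → S → ℝ} {γ β ε : ℝ}

lemma sgt2L1_term_le (hP0 : ∀ s a s', 0 ≤ P s a s') (hβ : 0 ≤ β) {Q₁ Q₂ : S → A → ℝ}
    (hL : sgt2L1 P r γ β Q₁ Q₂ ≤ ε) (s : S) (a : A) :
    ∑ s', P s a s' * (r s a s' + γ * maxQ Q₂ s' - Q₁ s a) ^ 2 +
        β / 2 * (Q₂ s a - Q₁ s a) ^ 2 ≤ ε * Fintype.card S * Fintype.card A := by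
  have hN : (0 : ℝ) < Fintype.card S * Fintype.card A := by positivity
  rw [sgt2L1, one_div, inv_mul_le_iff₀ hN, mul_comm, ← mul_assoc] at hL
  refine le_trans ?_ hL
  refine single_le_sum (f := fun p : S × A => ∑ s', P p.1 p.2 s' *
      (r p.1 p.2 s' + γ * maxQ Q₂ s' - Q₁ p.1 p.2) ^ 2 + β / 2 * (Q₂ p.1 p.2 - Q₁ p.1 p.2) ^ 2)
    (fun p _ => ?_) (mem_univ (s, a))
  exact add_nonneg (sum_nonneg fun s' _ => mul_nonneg (hP0 _ _ s') (sq_nonneg _)) (by positivity)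

lemma abs_bellmanT_sub_le_of_sgt2L1_le (hP0 : ∀ s a s', 0 ≤ P s a s')
    (hP1 : ∀ s a, ∑ s', P s a s' = 1) (hβ : 0 ≤ β) {Q₁ Q₂ : S → A → ℝ}
    (hL : sgt2L1 P r γ β Q₁ Q₂ ≤ ε) (s : S) (a : A) :
    |bellmanT P r γ Q₂ s a - Q₁ s a| ≤ Real.sqrt (ε * Fintype.card S * Fintype.card A) := by
  rw [← Real.sqrt_sq_eq_abs]
  refine Real.sqrt_le_sqrt ?_
  have hjensen := sq_sum_mul_le_sum_mul_sq (hP0 s a) (hP1 s a)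
    (x := fun s' => r s a s' + γ * maxQ Q₂ s' - Q₁ s a)
  have hterm := sgt2L1_term_le hP0 hβ hL s a
  have hreg : 0 ≤ β / 2 * (Q₂ s a - Q₁ s a) ^ 2 := by positivity
  rw [bellmanT_sub_eq_sum hP1]
  linarith

lemma abs_sub_le_of_sgt2L1_le (hP0 : ∀ s a s', 0 ≤ P s a s') (hβ : 0 < β) {Q₁ Q₂ : S → A → ℝ}
    (hL : sgt2L1 P r γ β Q₁ Q₂ ≤ ε) (s : S) (a : A) :
    |Q₂ s a - Q₁ s a| ≤ Real.sqrt (2 * ε * Fintype.card S * Fintype.card A / β) := by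
  rw [← Real.sqrt_sq_eq_abs]
  refine Real.sqrt_le_sqrt ?_
  have hterm := sgt2L1_term_le hP0 hβ.le hL s a
  have hbellman : 0 ≤ ∑ s', P s a s' * (r s a s' + γ * maxQ Q₂ s' - Q₁ s a) ^ 2 :=
    sum_nonneg fun s' _ => mul_nonneg (hP0 s a s') (sq_nonneg _)
  rw [le_div_iff₀ hβ]
  linarith

lemma supNorm_sub_fixedPoint_le_of_sgt2L1_le (hγ0 : 0 ≤ γ) (hγ1 : γ < 1)
    (hP0 : ∀ s a s', 0 ≤ P s a s') (hP1 : ∀ s a, ∑ s', P s a s' = 1)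
    {Qstar : S → A → ℝ} (hQstar : bellmanT P r γ Qstar = Qstar) (hβ : 0 < β)
    {Q₁ Q₂ : S → A → ℝ} (hL : sgt2L1 P r γ β Q₁ Q₂ ≤ ε) :
    supNorm (fun s a => Q₁ s a - Qstar s a) ≤
      Real.sqrt (ε * Fintype.card S * Fintype.card A) / (1 - γ) +
        γ / (1 - γ) * Real.sqrt (2 * ε * Fintype.card S * Fintype.card A / β) :=
  supNorm_sub_fixedPoint_le hγ0 hγ1 hP0 hP1 hQstar
    (abs_bellmanT_sub_le_of_sgt2L1_le hP0 hP1 hβ.le hL) (abs_sub_le_of_sgt2L1_le hP0 hβ hL)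

end Loss

theorem sgt2_dqn_optimality_general {S A : Type*} [Fintype S] [Fintype A] [Nonempty S] [Nonempty A]
    (P r : S → A → S → ℝ) (γ : ℝ) (hγ0 : 0 ≤ γ) (hγ1 : γ < 1)
    (hP0 : ∀ s a s', 0 ≤ P s a s') (hP1 : ∀ s a, ∑ s', P s a s' = 1)
    (Qstar : S → A → ℝ) (hQstar : bellmanT P r γ Qstar = Qstar)
    (β ε : ℝ) (hβ : 0 < β)
    (Q₁ Q₂ : S → A → ℝ)
    (hL1 : sgt2L1 P r γ β Q₁ Q₂ ≤ ε)
    (hL2 : sgt2L2 P r γ β Q₁ Q₂ ≤ ε) :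
    supNorm (fun s a => Q₁ s a - Qstar s a) ≤
      Real.sqrt (ε * (Fintype.card S : ℝ) * (Fintype.card A : ℝ)) / (1 - γ) +
        γ / (1 - γ) *
          Real.sqrt (2 * ε * (Fintype.card S : ℝ) * (Fintype.card A : ℝ) / β) ∧
    supNorm (fun s a => Q₂ s a - Qstar s a) ≤
      Real.sqrt (ε * (Fintype.card S : ℝ) * (Fintype.card A : ℝ)) / (1 - γ) +
        γ / (1 - γ) *
          Real.sqrt (2 * ε * (Fintype.card S : ℝ) * (Fintype.card A : ℝ) / β) :=
  ⟨supNorm_sub_fixedPoint_le_of_sgt2L1_le hγ0 hγ1 hP0 hP1 hQstar hβ hL1,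
    supNorm_sub_fixedPoint_le_of_sgt2L1_le hγ0 hγ1 hP0 hP1 hQstar hβ
      (sgt2L2_eq_sgt2L1_swap P r γ β Q₁ Q₂ ▸ hL2)⟩

theorem sgt2_dqn_optimality {S A : Type*} [Fintype S] [Fintype A] [Nonempty S] [Nonempty A]
    (P r : S → A → S → ℝ) (γ : ℝ) (hγ0 : 0 ≤ γ) (hγ1 : γ < 1)
    (hP0 : ∀ s a s', 0 ≤ P s a s') (hP1 : ∀ s a, ∑ s', P s a s' = 1)
    (Qstar : S → A → ℝ) (hQstar : bellmanT P r γ Qstar = Qstar)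
    (β ε : ℝ) (hβ : 0 < β) (hε : 0 < ε)
    (Q₁ Q₂ : S → A → ℝ)
    (hL1 : sgt2L1 P r γ β Q₁ Q₂ ≤ ε)
    (hL2 : sgt2L2 P r γ β Q₁ Q₂ ≤ ε) :
    supNorm (fun s a => Q₁ s a - Qstar s a) ≤
      Real.sqrt (ε * (Fintype.card S : ℝ) * (Fintype.card A : ℝ)) / (1 - γ) +
        γ / (1 - γ) *
          Real.sqrt (2 * ε * (Fintype.card S : ℝ) * (Fintype.card A : ℝ) / β) ∧
    supNorm (fun s a => Q₂ s a - Qstar s a) ≤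
      Real.sqrt (ε * (Fintype.card S : ℝ) * (Fintype.card A : ℝ)) / (1 - γ) +
        γ / (1 - γ) *
          Real.sqrt (2 * ε * (Fintype.card S : ℝ) * (Fintype.card A : ℝ) / β) :=
  sgt2_dqn_optimality_general P r γ hγ0 hγ1 hP0 hP1 Qstar hQstar β ε hβ Q₁ Q₂ hL1 hL2
end

section
/- For any β > 0, the SGT2 ODE model is globally attractive at (Q*, Q*): every differentiable curve t ↦ (Qᴬ_t, Qᴮ_t) : [0,∞) → ℝ^{S×A} × ℝ^{S×A} satisfying, for all t ≥ 0 and all (s,a) ∈ S×A, d/dt Qᴬ_t(s,a) = d(s,a)·(Σ_{s'} P(s'|s,a)·(r(s,a,s') + γ·max_{a'} Qᴮ_t(s',a')) − Qᴬ_t(s,a) + β·(Qᴮ_t(s,a) − Qᴬ_t(s,a))) and d/dt Qᴮ_t(s,a) = d(s,a)·(Σ_{s'} P(s'|s,a)·(r(s,a,s') + γ·max_{a'} Qᴬ_t(s',a')) − Qᴮ_t(s,a) + β·(Qᴬ_t(s,a) − Qᴮ_t(s,a))) converges as t → ∞ to Qᴬ_t → Q* and Qᴮ_t → Q* (componentwise).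 -/
open Finset

/-!
Let `y t = B e^{-c t}` with `c < d(s,a)(1 - γ)` for all `(s,a)` and `B` exceeding every initial
error. Both errors `Qᴬ_t - Q*` and `Qᴮ_t - Q*` stay strictly inside the tube `|·| < y t`: at a first
time where some component reaches the boundary, all components are still `≤ y t`, so the
`γ`-contraction of the Bellman operator and `β ≥ 0` force that component's squared error to
decrease faster than `y²`, contradicting the first crossing.
-/

open Filter Set Topology

theorem HasDerivAt.nonneg_of_eventually_le_left {f : ℝ → ℝ} {f' x : ℝ} (hf : HasDerivAt f f' x)
    (hle : ∀ᶠ t in 𝓝[<] x, f t ≤ f x) : 0 ≤ f' := by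
  have hslope : Tendsto (slope f x) (𝓝[<] x) (𝓝 f') :=
    (hasDerivWithinAt_iff_tendsto_slope' (s := Iio x) (lt_irrefl x)).1 hf.hasDerivWithinAt
  refine ge_of_tendsto hslope ?_
  filter_upwards [hle, self_mem_nhdsWithin] with t ht htx
  rw [slope_def_field]
  exact div_nonneg_of_nonpos (sub_nonpos.2 ht) (sub_nonpos.2 (le_of_lt htx))

theorem forall_lt_zero_of_deriv_lt_zero_on_boundary {ι : Type*} [Finite ι] {f f' : ι → ℝ → ℝ}
    {a : ℝ} (hf : ∀ i, ∀ t, a ≤ t → HasDerivAt (f i) (f' i t) t) (ha : ∀ i, f i a < 0)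
    (hbdry : ∀ t, a < t → (∀ j, f j t ≤ 0) → ∀ i, f i t = 0 → f' i t < 0) :
    ∀ t, a ≤ t → ∀ i, f i t < 0 := by
  by_contra! hbad
  set Z := ⋃ i, Ici a ∩ f i ⁻¹' Ici 0
  have hZ : IsClosed Z := isClosed_iUnion_of_finite fun i =>
    ContinuousOn.preimage_isClosed_of_isClosed
      (fun t ht => (hf i t ht).continuousAt.continuousWithinAt) isClosed_Ici isClosed_Ici
  have hZne : Z.Nonempty := by
    obtain ⟨t, ht, i, hi⟩ := hbad
    exact ⟨t, mem_iUnion.2 ⟨i, ht, hi⟩⟩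
  have hZbdd : BddBelow Z := ⟨a, fun t ht => by
    obtain ⟨i, hi, -⟩ := mem_iUnion.1 ht
    exact hi⟩
  set τ := sInf Z
  obtain ⟨i, haτ, hiτ⟩ := mem_iUnion.1 (hZ.csInf_mem hZne hZbdd)
  have hbefore : ∀ t ∈ Ico a τ, ∀ j, f j t < 0 := fun t ht j =>
    not_le.1 fun h => (csInf_le hZbdd (mem_iUnion.2 ⟨j, ht.1, h⟩)).not_gt ht.2
  have hτ : a < τ := lt_of_le_of_ne haτ fun h => (ha i).not_ge (h ▸ hiτ)
  have hleft : ∀ᶠ t in 𝓝[<] τ, t ∈ Ico a τ := by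
    filter_upwards [Ioo_mem_nhdsLT hτ] with t ht using ⟨ht.1.le, ht.2⟩
  have hτle : ∀ j, f j τ ≤ 0 := fun j =>
    le_of_tendsto ((hf j τ haτ).continuousAt.tendsto.mono_left nhdsWithin_le_nhds)
      (hleft.mono fun t ht => (hbefore t ht j).le)
  have hτi : f i τ = 0 := le_antisymm (hτle i) hiτ
  have hderiv : 0 ≤ f' i τ := (hf i τ haτ).nonneg_of_eventually_le_left
    (hleft.mono fun t ht => hτi ▸ (hbefore t ht i).le)
  exact (hbdry τ hτ hτle i hτi).not_ge hderiv

theorem tendsto_of_abs_sub_le_exp {f : ℝ → ℝ} {L B c : ℝ} (hc : 0 < c)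
    (h : ∀ t, 0 ≤ t → |f t - L| ≤ B * Real.exp (-c * t)) : Tendsto f atTop (𝓝 L) := by
  have hexp : Tendsto (fun t => B * Real.exp (-c * t)) atTop (𝓝 0) := by
    simpa [neg_mul] using
      (Real.tendsto_exp_neg_atTop_nhds_zero.comp (tendsto_id.const_mul_atTop hc)).const_mul B
  refine tendsto_iff_norm_sub_tendsto_zero.2 (squeeze_zero' ?_ ?_ hexp)
  · exact Eventually.of_forall fun t => norm_nonneg _
  · filter_upwards [eventually_ge_atTop 0] with t ht using h t ht

section Bellman

variable {S A : Type*} [Fintype A] [Nonempty A] {Q₁ Q₂ : S → A → ℝ} {C : ℝ}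

theorem maxQ_le_maxQ_add (h : ∀ s a, Q₁ s a ≤ Q₂ s a + C) (s : S) :
    maxQ Q₁ s ≤ maxQ Q₂ s + C :=
  sup'_le _ _ fun a _ => (h s a).trans (add_le_add_left (le_sup' (fun a => Q₂ s a) (mem_univ a)) C)

theorem abs_maxQ_sub_maxQ_le_s17 (h : ∀ s a, |Q₁ s a - Q₂ s a| ≤ C) (s : S) :
    |maxQ Q₁ s - maxQ Q₂ s| ≤ C :=
  abs_sub_le_iff.2
    ⟨sub_le_iff_le_add'.2 <| maxQ_le_maxQ_add (fun s a => by linarith [(abs_le.1 (h s a)).2]) s,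
      sub_le_iff_le_add'.2 <| maxQ_le_maxQ_add (fun s a => by linarith [(abs_le.1 (h s a)).1]) s⟩

variable [Fintype S] {P r : S → A → S → ℝ} {γ : ℝ}

theorem abs_bellmanT_sub_le (hγ : 0 ≤ γ) (hP0 : ∀ s a s', 0 ≤ P s a s')
    (hP1 : ∀ s a, ∑ s', P s a s' = 1) (h : ∀ s a, |Q₁ s a - Q₂ s a| ≤ C) (s : S) (a : A) :
    |bellmanT P r γ Q₁ s a - bellmanT P r γ Q₂ s a| ≤ γ * C :=
  calc |bellmanT P r γ Q₁ s a - bellmanT P r γ Q₂ s a|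
      = |∑ s', P s a s' * (γ * (maxQ Q₁ s' - maxQ Q₂ s'))| := by
        simp only [bellmanT, ← sum_sub_distrib]
        congr 1
        exact sum_congr rfl fun _ _ => by ring
    _ ≤ ∑ s', P s a s' * (γ * C) := by
        refine (abs_sum_le_sum_abs _ _).trans (sum_le_sum fun s' _ => ?_)
        rw [abs_mul, abs_mul, abs_of_nonneg (hP0 s a s'), abs_of_nonneg hγ]
        have := abs_maxQ_sub_maxQ_le_s17 h s'
        gcongr
        exact hP0 s a s'
    _ = γ * C := by rw [← sum_mul, hP1, one_mul]

end Bellman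

section SGT2

variable {S A : Type*} [Fintype S] [Fintype A] [Nonempty A] {P r : S → A → S → ℝ} {γ β : ℝ}
  {d Qstar : S → A → ℝ}

/-- `Qᴬ` follows `sgt2Field (Qᴬ_t) (Qᴮ_t)` and `Qᴮ` follows `sgt2Field (Qᴮ_t) (Qᴬ_t)`. -/
noncomputable def sgt2Field (P r : S → A → S → ℝ) (γ β : ℝ) (d : S → A → ℝ) (F G : S → A → ℝ) :
    S → A → ℝ :=
  fun s a => d s a * (bellmanT P r γ G s a - F s a + β * (G s a - F s a))

theorem error_mul_sgt2Field_le (hγ : 0 ≤ γ) (hP0 : ∀ s a s', 0 ≤ P s a s')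
    (hP1 : ∀ s a, ∑ s', P s a s' = 1) (hQstar : bellmanT P r γ Qstar = Qstar) (hβ : 0 ≤ β)
    {F G : S → A → ℝ} {y : ℝ} (hG : ∀ s a, |G s a - Qstar s a| ≤ y) {s : S} {a : A}
    (hd : 0 ≤ d s a) (hF : |F s a - Qstar s a| = y) :
    (F s a - Qstar s a) * sgt2Field P r γ β d F G s a ≤ -(d s a * (1 - γ) * y ^ 2) := by
  have hT : |bellmanT P r γ G s a - Qstar s a| ≤ γ * y := by
    have := abs_bellmanT_sub_le (r := r) hγ hP0 hP1 hG s a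
    rwa [hQstar] at this
  set e := F s a - Qstar s a
  have hsq : e ^ 2 = y ^ 2 := by rw [← sq_abs, hF]
  have he : 0 ≤ y := hF ▸ abs_nonneg e
  have hTe : e * (bellmanT P r γ G s a - Qstar s a) ≤ γ * y ^ 2 :=
    calc e * (bellmanT P r γ G s a - Qstar s a)
        ≤ |e| * |bellmanT P r γ G s a - Qstar s a| := abs_mul e _ ▸ le_abs_self _
      _ ≤ y * (γ * y) := by rw [hF]; exact mul_le_mul_of_nonneg_left hT he
      _ = γ * y ^ 2 := by ring
  have hGe : e * (G s a - Qstar s a) ≤ e ^ 2 :=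
    calc e * (G s a - Qstar s a) ≤ |e| * |G s a - Qstar s a| := abs_mul e _ ▸ le_abs_self _
      _ ≤ y * y := by rw [hF]; exact mul_le_mul_of_nonneg_left (hG s a) he
      _ = e ^ 2 := by rw [hsq]; ring
  calc e * sgt2Field P r γ β d F G s a
      = d s a * (e * (bellmanT P r γ G s a - Qstar s a) - e ^ 2
          + β * (e * (G s a - Qstar s a) - e ^ 2)) := by
        simp only [sgt2Field, e]
        ring
    _ ≤ d s a * (γ * y ^ 2 - y ^ 2) := by
        have := mul_nonpos_of_nonneg_of_nonpos hβ (sub_nonpos.2 hGe)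
        gcongr
        linarith
    _ = -(d s a * (1 - γ) * y ^ 2) := by ring

theorem sgt2_abs_error_lt_exp [Nonempty S] (hγ : 0 ≤ γ) (hP0 : ∀ s a s', 0 ≤ P s a s')
    (hP1 : ∀ s a, ∑ s', P s a s' = 1) (hQstar : bellmanT P r γ Qstar = Qstar) (hβ : 0 ≤ β)
    (hd : ∀ s a, 0 ≤ d s a) {Q : Bool → ℝ → S → A → ℝ}
    (hQ : ∀ b s a, ∀ t, 0 ≤ t →
      HasDerivAt (fun u => Q b u s a) (sgt2Field P r γ β d (Q b t) (Q (!b) t) s a) t)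
    {B c : ℝ} (hB : ∀ b s a, |Q b 0 s a - Qstar s a| < B) (hc : ∀ s a, c < d s a * (1 - γ)) :
    ∀ t, 0 ≤ t → ∀ b s a, |Q b t s a - Qstar s a| < B * Real.exp (-c * t) := by
  set y : ℝ → ℝ := fun t => B * Real.exp (-c * t)
  have hB0 : 0 < B :=
    (abs_nonneg _).trans_lt (hB true (Classical.arbitrary S) (Classical.arbitrary A))
  have hy0 : ∀ t, 0 < y t := fun t => by positivity
  have hy : ∀ t, HasDerivAt y (-c * y t) t := fun t => by
    simpa [y, mul_comm, mul_left_comm] using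
      (((hasDerivAt_id t).const_mul (-c)).exp).const_mul B
  -- Squaring turns the two-sided tube `|e| < y` into the one-sided condition `e² - y² < 0`.
  have hneg := forall_lt_zero_of_deriv_lt_zero_on_boundary (ι := Bool × S × A)
    (f := fun i t => (Q i.1 t i.2.1 i.2.2 - Qstar i.2.1 i.2.2) ^ 2 - y t ^ 2)
    (f' := fun i t => 2 * ((Q i.1 t i.2.1 i.2.2 - Qstar i.2.1 i.2.2)
      * sgt2Field P r γ β d (Q i.1 t) (Q (!i.1) t) i.2.1 i.2.2) - 2 * (y t * (-c * y t))) (a := 0)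
    (fun ⟨b, s, a⟩ t ht => by
      refine ((((hQ b s a t ht).sub_const (Qstar s a)).pow 2).sub ((hy t).pow 2)).congr_deriv ?_
      push_cast
      ring)
    (fun ⟨b, s, a⟩ => by
      simpa [y, sub_neg, sq_lt_sq, abs_of_pos hB0] using hB b s a)
    (fun t _ hall ⟨b, s, a⟩ hzero => by
      have hbound : ∀ s a, |Q (!b) t s a - Qstar s a| ≤ y t := fun s a =>
        abs_le_of_sq_le_sq (sub_nonpos.1 (hall (!b, s, a))) (hy0 t).le
      have hedge : |Q b t s a - Qstar s a| = y t := by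
        rw [← abs_of_pos (hy0 t), ← sq_eq_sq_iff_abs_eq_abs]
        exact sub_eq_zero.1 hzero
      have := error_mul_sgt2Field_le hγ hP0 hP1 hQstar hβ hbound (hd s a) hedge
      nlinarith [mul_pos (sub_pos.2 (hc s a)) (pow_pos (hy0 t) 2)])
  exact fun t ht b s a =>
    abs_lt_of_sq_lt_sq (sub_neg.1 (hneg t ht (b, s, a))) (hy0 t).le

end SGT2

theorem sgt2_ode_globally_attractive
    {S A : Type*} [Fintype S] [Fintype A] [Nonempty S] [Nonempty A]
    (P r : S → A → S → ℝ) (γ : ℝ) (hγ0 : 0 ≤ γ) (hγ1 : γ < 1)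
    (hP0 : ∀ s a s', 0 ≤ P s a s') (hP1 : ∀ s a, ∑ s', P s a s' = 1)
    (Qstar : S → A → ℝ) (hQstar : bellmanT P r γ Qstar = Qstar)
    (β : ℝ) (hβ : 0 < β)
    (d : S → A → ℝ) (hd : ∀ s a, 0 < d s a)
    (QA QB : ℝ → S → A → ℝ)
    (hQA : ∀ (s : S) (a : A), ∀ t : ℝ, 0 ≤ t → HasDerivAt (fun u => QA u s a)
      (d s a * ((∑ s', P s a s' * (r s a s' + γ * maxQ (QB t) s')) - QA t s a
        + β * (QB t s a - QA t s a))) t)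
    (hQB : ∀ (s : S) (a : A), ∀ t : ℝ, 0 ≤ t → HasDerivAt (fun u => QB u s a)
      (d s a * ((∑ s', P s a s' * (r s a s' + γ * maxQ (QA t) s')) - QB t s a
        + β * (QA t s a - QB t s a))) t) :
    ∀ s a, Tendsto (fun t => QA t s a) atTop (nhds (Qstar s a)) ∧
      Tendsto (fun t => QB t s a) atTop (nhds (Qstar s a)) := by
  obtain ⟨p, hp⟩ := Finite.exists_min fun p : S × A => d p.1 p.2
  have hdp := hd p.1 p.2
  set c := d p.1 p.2 * (1 - γ) / 2
  have hγ : 0 < 1 - γ := by linarith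
  have hc0 : 0 < c := by positivity
  have hc : ∀ s a, c < d s a * (1 - γ) := fun s a =>
    calc c < d p.1 p.2 * (1 - γ) := half_lt_self (mul_pos hdp hγ)
      _ ≤ d s a * (1 - γ) := by gcongr; exact hp (s, a)
  set Q : Bool → ℝ → S → A → ℝ := fun b => bif b then QA else QB
  have hQ : ∀ b s a, ∀ t, 0 ≤ t →
      HasDerivAt (fun u => Q b u s a) (sgt2Field P r γ β d (Q b t) (Q (!b) t) s a) t := by
    rintro (_ | _) s a t ht
    exacts [hQB s a t ht, hQA s a t ht]
  obtain ⟨M, hM⟩ := Finite.exists_le fun i : Bool × S × A =>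
    |Q i.1 0 i.2.1 i.2.2 - Qstar i.2.1 i.2.2|
  have hclose := sgt2_abs_error_lt_exp hγ0 hP0 hP1 hQstar hβ.le (fun s a => (hd s a).le) hQ
    (fun b s a => (hM (b, s, a)).trans_lt (lt_add_one M)) hc
  exact fun s a =>
    ⟨tendsto_of_abs_sub_le_exp hc0 fun t ht => (hclose t ht true s a).le,
      tendsto_of_abs_sub_le_exp hc0 fun t ht => (hclose t ht false s a).le⟩
end
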